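/- arXiv:2111.00845 — 4 statements merged into one kernel-verified Lean document; each statement's English description precedes it below -/
import Mathlib

section
/- Let D = ℂ \ K be a co-compact domain with K compact and nonempty, and let (D''_j) be an exhaustion of D. Then (D''_j) admits a refinement (D'_j) with the following nesting property: whenever q₁ is a connected component of ℂ \ D'_{j₁} and q₂ is a connected component of ℂ \ D'_{j₂} with j₁ ≥ j₂ and q₁ ∩ q₂ ≠ ∅, then either q₁ = q₂ or q₁ is contained in the interior of q₂. -/
open Set Metric Filter MeasureTheory

/-- A Jordan curve: the image of an injective continuous map of the unit circle into `ℂ`. -/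
def IsJordanCurve (J : Set ℂ) : Prop :=
  ∃ f : ℂ → ℂ, ContinuousOn f (sphere (0 : ℂ) 1) ∧ Set.InjOn f (sphere (0 : ℂ) 1) ∧
    J = f '' sphere (0 : ℂ) 1

/-- `R` is the closed Jordan region bounded by the Jordan curve `J`: the union of `J`
and the bounded connected component of its complement. -/
def IsClosedJordanRegionOf (R J : Set ℂ) : Prop :=
  IsJordanCurve J ∧ ∃ x ∈ Jᶜ, Bornology.IsBounded (connectedComponentIn Jᶜ x) ∧
    R = J ∪ connectedComponentIn Jᶜ x

/-- `p` is a connected component of the set `S ⊆ ℂ`. -/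
def IsCompOf (p S : Set ℂ) : Prop := ∃ x ∈ S, p = connectedComponentIn S x

/-- A co-compact domain: a nonempty connected open subset of `ℂ` whose complement
(`K` in the notation `D = ℂ \ K`) is compact. -/
def IsCoCompactDomain (D : Set ℂ) : Prop := IsOpen D ∧ IsConnected D ∧ IsCompact Dᶜ

/-- `D` is countably connected: it has countably many complementary components. -/
def CountablyConnected (D : Set ℂ) : Prop := {p : Set ℂ | IsCompOf p Dᶜ}.Countable

/-- An exhaustion of `D`: an increasing sequence of nonempty open connected sets with
union `D`, such that each complement `ℂ \ Dseq j` is a nonempty finite union of pairwise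
disjoint closed Jordan regions whose boundary Jordan curves are contained in `D`. -/
def IsExhaustion (D : Set ℂ) (Dseq : ℕ → Set ℂ) : Prop :=
  (∀ j, IsOpen (Dseq j)) ∧ (∀ j, IsConnected (Dseq j)) ∧
  (∀ j, Dseq j ⊆ Dseq (j + 1)) ∧ (⋃ j, Dseq j) = D ∧
  ∀ j, ∃ (n : ℕ) (Reg Cur : Fin (n + 1) → Set ℂ),
    (∀ i, IsClosedJordanRegionOf (Reg i) (Cur i)) ∧
    (∀ i, Cur i ⊆ D) ∧
    (Pairwise fun i k => Disjoint (Reg i) (Reg k)) ∧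
    (Dseq j)ᶜ = ⋃ i, Reg i

/-- The exhaustion `Dseq` of `D` is a refinement of the exhaustion `Dseq'` of `D`:
every connected component `p` of `ℂ \ Dseq j` is a connected component of
`ℂ \ Dseq' k` for some `k ≥ j`. -/
def IsRefinementOf (D : Set ℂ) (Dseq Dseq' : ℕ → Set ℂ) : Prop :=
  IsExhaustion D Dseq ∧
  ∀ j p, IsCompOf p (Dseq j)ᶜ → ∃ k, j ≤ k ∧ IsCompOf p (Dseq' k)ᶜ

/-- A circle domain: a co-compact domain each of whose complementary components is a
single point or a closed disk of positive radius. -/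
def IsCircleDomain (G : Set ℂ) : Prop :=
  IsCoCompactDomain G ∧
  ∀ p, IsCompOf p Gᶜ → (∃ x, p = {x}) ∨ ∃ x r, 0 < r ∧ p = closedBall x r

/-- A conformal map on `U`: an injective holomorphic function. -/
def IsConformalOn (f : ℂ → ℂ) (U : Set ℂ) : Prop :=
  DifferentiableOn ℂ f U ∧ Set.InjOn f U

/-- `f` fixes infinity on `U`: `|f z| → ∞` as `|z| → ∞` within `U`. -/
def FixesInfinity (f : ℂ → ℂ) (U : Set ℂ) : Prop :=
  Tendsto (fun z => ‖f z‖)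
    (Filter.comap (fun z : ℂ => ‖z‖) atTop ⊓ 𝓟 U) atTop

/-!
Pass to a subsequence of the exhaustion along which the boundary curves of each level already
lie in the next level; this is possible because those finitely many curves form a compact subset
of `D`. A component of a later complement then lies in a component of an earlier one, which is one
of its closed Jordan regions, and it misses that region's boundary curve, hence lies in its
interior.
-/

section Components

variable {X : Type*} [TopologicalSpace X]

theorem frontier_connectedComponentIn_subset [LocallyConnectedSpace X] {S : Set X}
    (hS : IsOpen S) (x : X) : frontier (connectedComponentIn S x) ⊆ Sᶜ := by
  intro y hy hyS
  obtain ⟨z, hzy, hzx⟩ :=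
    mem_closure_iff.mp hy.1 _ hS.connectedComponentIn (mem_connectedComponentIn hyS)
  have hyx : connectedComponentIn S y = connectedComponentIn S x := by
    rw [connectedComponentIn_eq hzy, ← connectedComponentIn_eq hzx]
  refine hy.2 ?_
  rw [hS.connectedComponentIn.interior_eq, ← hyx]
  exact mem_connectedComponentIn hyS

theorem connectedComponentIn_iUnion_of_pairwise_disjoint {ι : Type*} [Finite ι] {s : ι → Set X}
    (hclosed : ∀ i, IsClosed (s i)) (hconn : ∀ i, IsPreconnected (s i))
    (hdisj : Pairwise fun i j => Disjoint (s i) (s j)) {i : ι} {x : X} (hx : x ∈ s i) :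
    connectedComponentIn (⋃ j, s j) x = s i := by
  refine Subset.antisymm ?_ ((hconn i).subset_connectedComponentIn hx (subset_iUnion s i))
  set rest := ⋃ (j) (_ : j ≠ i), s j
  have hrest : IsClosed rest :=
    isClosed_iUnion_of_finite fun j => isClosed_iUnion_of_finite fun _ => hclosed j
  have hsep : Disjoint (s i) rest := disjoint_iUnion₂_right.2 fun j hj => hdisj hj.symm
  have hcover : (⋃ j, s j) ⊆ s i ∪ rest := by
    refine iUnion_subset fun j => ?_
    by_cases hj : j = i
    · exact hj ▸ subset_union_left
    · exact (subset_biUnion_of_mem (u := s) hj).trans subset_union_right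
  refine (isPreconnected_iff_subset_of_disjoint_closed.1 isPreconnected_connectedComponentIn
    _ _ (hclosed i) hrest ((connectedComponentIn_subset _ _).trans hcover)
    (by rw [hsep.inter_eq, inter_empty])).resolve_right fun h => ?_
  exact hsep.notMem_of_mem_left hx (h (mem_connectedComponentIn (mem_iUnion_of_mem i hx)))

end Components

namespace IsCompOf

variable {p q A B : Set ℂ}

theorem subset (hp : IsCompOf p A) : p ⊆ A := by
  obtain ⟨x, -, rfl⟩ := hp
  exact connectedComponentIn_subset _ _

theorem subset_of_nonempty_inter (hp : IsCompOf p A) (hq : IsCompOf q B) (hAB : A ⊆ B)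
    (hpq : (p ∩ q).Nonempty) : p ⊆ q := by
  obtain ⟨x, -, rfl⟩ := hp
  obtain ⟨y, -, rfl⟩ := hq
  obtain ⟨z, hzp, hzq⟩ := hpq
  rw [connectedComponentIn_eq hzp, connectedComponentIn_eq hzq]
  exact connectedComponentIn_mono z hAB

theorem eq_of_nonempty_inter (hp : IsCompOf p A) (hq : IsCompOf q A) (hpq : (p ∩ q).Nonempty) :
    p = q :=
  (hp.subset_of_nonempty_inter hq le_rfl hpq).antisymm
    (hq.subset_of_nonempty_inter hp le_rfl (inter_comm p q ▸ hpq))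

theorem subset_interior_of_disjoint_frontier (hp : IsCompOf p A) (hq : IsCompOf q B)
    (hAB : A ⊆ B) (hpq : (p ∩ q).Nonempty) (hfr : Disjoint A (frontier q)) :
    p ⊆ interior q := by
  rw [← self_sdiff_frontier]
  exact subset_sdiff.2 ⟨hp.subset_of_nonempty_inter hq hAB hpq, hfr.mono_left hp.subset⟩

end IsCompOf

namespace IsJordanCurve

variable {J : Set ℂ}

theorem isCompact (h : IsJordanCurve J) : IsCompact J := by
  obtain ⟨f, hf, -, rfl⟩ := h
  exact (isCompact_sphere 0 1).image_of_continuousOn hf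

theorem isConnected (h : IsJordanCurve J) : IsConnected J := by
  obtain ⟨f, hf, -, rfl⟩ := h
  exact (isConnected_sphere (by rw [Complex.rank_real_complex]; norm_num) 0 zero_le_one).image f hf

end IsJordanCurve

namespace IsClosedJordanRegionOf

variable {R J : Set ℂ}

theorem isClosed (h : IsClosedJordanRegionOf R J) : IsClosed R := by
  obtain ⟨hJ, x, -, -, rfl⟩ := h
  have hJc := hJ.isCompact.isClosed
  have hfr : frontier (connectedComponentIn Jᶜ x) ⊆ J := by
    simpa using frontier_connectedComponentIn_subset hJc.isOpen_compl x
  rw [← closure_subset_iff_isClosed, closure_union, hJc.closure_eq, closure_eq_self_union_frontier]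
  exact union_subset subset_union_left
    (union_subset subset_union_right (hfr.trans subset_union_left))

theorem isConnected (h : IsClosedJordanRegionOf R J) : IsConnected R := by
  obtain ⟨hJ, x, hx, hbd, rfl⟩ := h
  set U := connectedComponentIn Jᶜ x
  have hfr : frontier U ⊆ J := by
    simpa using frontier_connectedComponentIn_subset hJ.isCompact.isClosed.isOpen_compl x
  have hU : U.Nonempty := ⟨x, mem_connectedComponentIn hx⟩
  obtain ⟨z, hz⟩ : (frontier U).Nonempty :=
    nonempty_frontier_iff.2 ⟨hU, fun hu => NormedSpace.unbounded_univ ℝ ℂ (hu ▸ hbd)⟩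
  have hR : J ∪ closure U = J ∪ U := by
    rw [closure_eq_self_union_frontier, union_comm U, ← union_assoc, union_eq_left.2 hfr]
  rw [← hR]
  exact IsConnected.union ⟨z, hfr hz, hz.1⟩ hJ.isConnected
    ⟨hU.closure, isPreconnected_connectedComponentIn.closure⟩

theorem frontier_subset (h : IsClosedJordanRegionOf R J) : frontier R ⊆ J := by
  have hR := h.isClosed
  obtain ⟨hJ, x, -, -, rfl⟩ := h
  have hU : connectedComponentIn Jᶜ x ⊆ interior (J ∪ connectedComponentIn Jᶜ x) :=
    hJ.isCompact.isClosed.isOpen_compl.connectedComponentIn.subset_interior_iff.2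
      subset_union_right
  rw [hR.frontier_eq]
  rintro z ⟨hzJ | hzU, hzi⟩
  exacts [hzJ, (hzi (hU hzU)).elim]

end IsClosedJordanRegionOf

def HasNestedComplComponents (Dseq : ℕ → Set ℂ) : Prop :=
  ∀ j₁ j₂, j₂ ≤ j₁ → ∀ q₁ q₂, IsCompOf q₁ (Dseq j₁)ᶜ → IsCompOf q₂ (Dseq j₂)ᶜ →
    (q₁ ∩ q₂).Nonempty → q₁ = q₂ ∨ q₁ ⊆ interior q₂

theorem Monotone.hasNestedComplComponents {Dseq : ℕ → Set ℂ} (hmono : Monotone Dseq)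
    (hfr : ∀ j q, IsCompOf q (Dseq j)ᶜ → frontier q ⊆ Dseq (j + 1)) :
    HasNestedComplComponents Dseq := by
  intro j₁ j₂ hj q₁ q₂ hq₁ hq₂ hne
  rcases hj.eq_or_lt with rfl | hlt
  · exact Or.inl (hq₁.eq_of_nonempty_inter hq₂ hne)
  · exact Or.inr (hq₁.subset_interior_of_disjoint_frontier hq₂ (compl_subset_compl.2 (hmono hj))
      hne (disjoint_compl_left.mono_right ((hfr j₂ q₂ hq₂).trans (hmono hlt))))

theorem exists_strictMono_forall_succ {P : ℕ → ℕ → Prop} (h : ∀ m, ∀ᶠ k in atTop, P m k) :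
    ∃ φ : ℕ → ℕ, StrictMono φ ∧ ∀ j, P (φ j) (φ (j + 1)) := by
  choose g hg using fun m => ((h m).and (eventually_gt_atTop m)).exists
  refine ⟨fun j => g^[j] 0, strictMono_nat_of_lt_succ fun j => ?_, fun j => ?_⟩
  · rw [Function.iterate_succ_apply']
    exact (hg _).2
  · dsimp only
    rw [Function.iterate_succ_apply']
    exact (hg _).1

namespace IsExhaustion

variable {D : Set ℂ} {Dseq : ℕ → Set ℂ}

theorem monotone (h : IsExhaustion D Dseq) : Monotone Dseq :=
  monotone_nat_of_le_succ h.2.2.1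

theorem comp_strictMono (h : IsExhaustion D Dseq) {φ : ℕ → ℕ} (hφ : StrictMono φ) :
    IsExhaustion D (Dseq ∘ φ) := by
  have hmono := h.monotone
  obtain ⟨hopen, hconn, -, hunion, hreg⟩ := h
  refine ⟨fun j => hopen _, fun j => hconn _, fun j => hmono (hφ j.lt_succ_self).le, ?_,
    fun j => hreg _⟩
  rw [Function.comp_def, hmono.iUnion_comp_tendsto_atTop hφ.tendsto_atTop, hunion]

theorem isRefinementOf_comp_strictMono (h : IsExhaustion D Dseq) {φ : ℕ → ℕ}
    (hφ : StrictMono φ) : IsRefinementOf D (Dseq ∘ φ) Dseq :=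
  ⟨h.comp_strictMono hφ, fun j _ hp => ⟨φ j, hφ.le_apply, hp⟩⟩

theorem eventually_frontier_subset (h : IsExhaustion D Dseq) (m : ℕ) :
    ∀ᶠ k in atTop, ∀ q, IsCompOf q (Dseq m)ᶜ → frontier q ⊆ Dseq k := by
  have hmono := h.monotone
  obtain ⟨hopen, -, -, hunion, hreg⟩ := h
  obtain ⟨n, Reg, Cur, hRC, hCD, hdisj, hcompl⟩ := hreg m
  obtain ⟨k, hk⟩ := (isCompact_iUnion fun i => (hRC i).1.isCompact).elim_directed_cover Dseq
    hopen (hunion ▸ iUnion_subset hCD) hmono.directed_le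
  filter_upwards [eventually_ge_atTop k] with k' hk' q ⟨x, hx, hq⟩
  rw [hcompl] at hx hq
  obtain ⟨i, hxi⟩ := mem_iUnion.1 hx
  rw [hq, connectedComponentIn_iUnion_of_pairwise_disjoint (fun i => (hRC i).isClosed)
    (fun i => (hRC i).isConnected.isPreconnected) hdisj hxi]
  exact (hRC i).frontier_subset.trans ((subset_iUnion Cur i).trans (hk.trans (hmono hk')))

end IsExhaustion

theorem exists_nested_refinement_general (D : Set ℂ) (D'' : ℕ → Set ℂ) (hex : IsExhaustion D D'') :
    ∃ D' : ℕ → Set ℂ, IsRefinementOf D D' D'' ∧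
      ∀ j₁ j₂, j₂ ≤ j₁ → ∀ q₁ q₂, IsCompOf q₁ (D' j₁)ᶜ → IsCompOf q₂ (D' j₂)ᶜ →
        (q₁ ∩ q₂).Nonempty → q₁ = q₂ ∨ q₁ ⊆ interior q₂ := by
  obtain ⟨φ, hφ, hfr⟩ := exists_strictMono_forall_succ hex.eventually_frontier_subset
  exact ⟨D'' ∘ φ, hex.isRefinementOf_comp_strictMono hφ,
    (hex.monotone.comp hφ.monotone).hasNestedComplComponents hfr⟩

/-- Every exhaustion admits a refinement with the nesting property
\eqref{sisalla}: intersecting complementary components of the refinement are either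
equal or nested in the interior. -/
theorem exists_nested_refinement (D : Set ℂ) (hD : IsCoCompactDomain D)
    (hK : Dᶜ.Nonempty) (D'' : ℕ → Set ℂ) (hex : IsExhaustion D D'') :
    ∃ D' : ℕ → Set ℂ, IsRefinementOf D D' D'' ∧
      ∀ j₁ j₂, j₂ ≤ j₁ → ∀ q₁ q₂, IsCompOf q₁ (D' j₁)ᶜ → IsCompOf q₂ (D' j₂)ᶜ →
        (q₁ ∩ q₂).Nonempty → q₁ = q₂ ∨ q₁ ⊆ interior q₂ :=
  exists_nested_refinement_general D D'' hex
end

section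
/- Let E : Ordinal → Set ℂ be an ordinal-indexed family of subsets of ℂ such that E 0 is compact, countable and nonempty; for every ordinal α, E (α+1) = { x ∈ E α : x is an accumulation point of E α } (i.e., the set of points of E α that are not isolated in E α); and for every nonzero limit ordinal λ, E λ = ⋂_{β < λ} E β. Then there exists an ordinal α such that E α is finite and nonempty and E (α+1) = ∅. -/
/-!
Every stage is a closed subset of the compact set `E 0`. A nonempty stage differs from the next
one: otherwise it would be a nonempty perfect subset of the countable set `E 0`, and nonempty
perfect sets in complete metric spaces contain a copy of the Cantor space. The stages thus
decrease strictly until one of them is empty, which must happen because the ordinals do not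
inject into `Set ℂ`. By Cantor's intersection theorem the first empty stage is not a limit, so
it follows a nonempty stage without self-accumulation points, which is finite by compactness.
-/

open Set Metric

universe u

theorem Perfect.not_countable {X : Type*} [MetricSpace X] [CompleteSpace X] {C : Set X}
    (hC : Perfect C) (hne : C.Nonempty) : ¬C.Countable := fun hcount ↦ by
  obtain ⟨f, hrange, -, hinj⟩ := hC.exists_nat_bool_injection hne
  have hcantor := (hcount.mono hrange).preimage hinj
  rw [preimage_range, countable_univ_iff, ← Cardinal.mk_le_aleph0_iff] at hcantor
  simp only [Cardinal.mk_pi, Cardinal.mk_fintype, Fintype.card_bool, Nat.cast_ofNat,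
    Cardinal.prod_const, Cardinal.lift_id, Cardinal.mk_eq_aleph0, Cardinal.two_power_aleph0]
    at hcantor
  exact hcantor.not_gt Cardinal.aleph0_lt_continuum

theorem IsCompact.finite_of_inter_derivedSet_eq_empty {X : Type*} [TopologicalSpace X]
    {s : Set X} (hs : IsCompact s) (h : s ∩ derivedSet s = ∅) : s.Finite := by
  by_contra hinf
  obtain ⟨x, hxs, hx⟩ := Set.Infinite.exists_accPt_of_subset_isCompact hinf hs subset_rfl
  exact h.subset ⟨hxs, hx⟩

theorem Metric.mem_derivedSet_iff {X : Type*} [PseudoMetricSpace X] {s : Set X} {x : X} :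
    x ∈ derivedSet s ↔ ∀ ε > 0, ∃ y ∈ s, y ≠ x ∧ dist y x < ε := by
  simp only [mem_derivedSet, accPt_iff_frequently, Filter.Frequently, Metric.eventually_nhds_iff]
  push Not
  simp only [and_assoc, and_comm, and_left_comm]

structure IsCantorBendixsonSeq {X : Type*} [TopologicalSpace X] (E : Ordinal → Set X) :
    Prop where
  add_one : ∀ α, E (α + 1) = E α ∩ derivedSet (E α)
  limit : ∀ lam, Order.IsSuccLimit lam → E lam = ⋂ β < lam, E β

namespace IsCantorBendixsonSeq

section

variable {X : Type*} [TopologicalSpace X] {E : Ordinal → Set X}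

theorem add_one_subset (hE : IsCantorBendixsonSeq E) (α : Ordinal) : E (α + 1) ⊆ E α := by
  rw [hE.add_one]
  exact inter_subset_left

theorem antitone (hE : IsCantorBendixsonSeq E) : Antitone E := by
  intro α β hαβ
  induction β using Ordinal.limitRecOn with
  | zero => rw [nonpos_iff_eq_zero.1 hαβ]
  | add_one γ ih =>
    obtain hlt | rfl := hαβ.lt_or_eq
    · exact (hE.add_one_subset γ).trans (ih (Order.lt_add_one_iff.1 hlt))
    · rfl
  | limit γ hγ _ =>
    obtain hlt | rfl := hαβ.lt_or_eq
    · rw [hE.limit γ hγ]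
      exact iInter₂_subset α hlt
    · rfl

theorem isClosed [T1Space X] (hE : IsCantorBendixsonSeq E) (h0 : IsClosed (E 0)) (α : Ordinal) :
    IsClosed (E α) := by
  induction α using Ordinal.limitRecOn with
  | zero => exact h0
  | add_one γ ih => exact hE.add_one γ ▸ ih.inter (isClosed_derivedSet _)
  | limit γ hγ ih => exact hE.limit γ hγ ▸ isClosed_biInter ih

theorem isCompact [T2Space X] (hE : IsCantorBendixsonSeq E) (h0 : IsCompact (E 0))
    (α : Ordinal) : IsCompact (E α) :=
  h0.of_isClosed_subset (hE.isClosed h0.isClosed α) (hE.antitone zero_le)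

theorem nonempty_of_isSuccLimit [T2Space X] (hE : IsCantorBendixsonSeq E)
    (h0 : IsCompact (E 0)) {lam : Ordinal} (hlam : Order.IsSuccLimit lam)
    (hne : ∀ β < lam, (E β).Nonempty) : (E lam).Nonempty := by
  have : Nonempty (Iio lam) := ⟨⟨0, hlam.bot_lt⟩⟩
  obtain ⟨x, hx⟩ := IsCompact.nonempty_iInter_of_directed_nonempty_isCompact_isClosed
    (fun β : Iio lam ↦ E β) (hE.antitone.comp_monotone (Subtype.mono_coe _)).directed_ge
    (fun β ↦ hne β β.2) (fun β ↦ hE.isCompact h0 β) (fun β ↦ hE.isClosed h0.isClosed β)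
  rw [hE.limit lam hlam]
  exact ⟨x, mem_iInter₂.2 fun β hβ ↦ mem_iInter.1 hx ⟨β, hβ⟩⟩

end

section Metric

variable {X : Type*} [MetricSpace X] [CompleteSpace X] {E : Ordinal.{u} → Set X}

theorem add_one_ne (hE : IsCantorBendixsonSeq E) (h0 : IsClosed (E 0)) (hc : (E 0).Countable)
    {α : Ordinal} (hne : (E α).Nonempty) : E (α + 1) ≠ E α := fun heq ↦ by
  have hperf : Perfect (E α) := by
    refine ⟨hE.isClosed h0 α, preperfect_iff_subset_derivedSet.2 ?_⟩
    exact inter_eq_left.1 ((hE.add_one α).symm.trans heq)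
  exact hperf.not_countable hne (hc.mono (hE.antitone zero_le))

theorem exists_eq_empty [Small.{u} X] (hE : IsCantorBendixsonSeq E) (h0 : IsClosed (E 0))
    (hc : (E 0).Countable) : ∃ α, E α = ∅ := by
  by_contra! hne
  refine not_injective_of_ordinal E (StrictAnti.injective fun α β hαβ ↦ ?_)
  calc E β ⊆ E (α + 1) := hE.antitone (Order.add_one_le_of_lt hαβ)
    _ ⊂ E α := (hE.add_one_subset α).ssubset_of_ne (hE.add_one_ne h0 hc (hne α))

theorem exists_nonempty_add_one_eq_empty [Small.{u} X] (hE : IsCantorBendixsonSeq E)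
    (h0 : IsCompact (E 0)) (hc : (E 0).Countable) (hne : (E 0).Nonempty) :
    ∃ α, (E α).Nonempty ∧ E (α + 1) = ∅ := by
  by_contra! hstep
  obtain ⟨α, hα⟩ := hE.exists_eq_empty h0.isClosed hc
  suffices ∀ α, (E α).Nonempty from (this α).ne_empty hα
  intro α
  induction α using Ordinal.limitRecOn with
  | zero => exact hne
  | add_one γ ih => exact hstep γ ih
  | limit γ hγ ih => exact hE.nonempty_of_isSuccLimit h0 hγ ih

end Metric

end IsCantorBendixsonSeq

/-- The transfinite Cantor–Bendixson process applied to a nonempty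
countable compact set `E 0 ⊆ ℂ` reaches a finite nonempty stage whose derived set is
empty. -/
theorem cantor_bendixson_terminates (E : Ordinal → Set ℂ)
    (hcomp : IsCompact (E 0)) (hcount : (E 0).Countable) (hne : (E 0).Nonempty)
    (hsucc : ∀ α : Ordinal,
      E (α + 1) = {x ∈ E α | ∀ ε > 0, ∃ y ∈ E α, y ≠ x ∧ dist y x < ε})
    (hlim : ∀ lam : Ordinal, Order.IsSuccLimit lam → E lam = ⋂ β < lam, E β) :
    ∃ α : Ordinal, (E α).Finite ∧ (E α).Nonempty ∧ E (α + 1) = ∅ := by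
  have hE : IsCantorBendixsonSeq E :=
    ⟨fun α ↦ by simp_rw [hsucc α, ← Metric.mem_derivedSet_iff, sep_mem_eq], hlim⟩
  obtain ⟨α, hα, hα'⟩ := hE.exists_nonempty_add_one_eq_empty hcomp hcount hne
  exact ⟨α, (hE.isCompact hcomp α).finite_of_inter_derivedSet_eq_empty (hE.add_one α ▸ hα'),
    hα, hα'⟩
end

section
/- There exists a constant C ∈ ℕ such that for every z ∈ ℂ, every R > 0, and every pairwise disjoint family (B̄(x_i, r_i))_{i ∈ I} of closed disks with r_i > 0, if each disk B̄(x_i, r_i) intersects the annulus B(z,R) \ B̄(z, R/e) and satisfies 2 r_i ≥ dist(B̄(x_i,r_i), z) (its diameter is at least its Euclidean distance to the point z), then the index set I has at most C elements. -/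
open Set Metric MeasureTheory
open scoped ENNReal NNReal

/-- There is an absolute bound `C` on the number of pairwise disjoint
closed disks which meet the annulus `B(z,R) \ B̄(z,R/e)` and whose diameter is at least
their distance to `z`. -/
theorem bounded_card_big_disks_meeting_annulus :
    ∃ C : ℕ, ∀ (I : Type) (x : I → ℂ) (r : I → ℝ) (z : ℂ) (R : ℝ),
      0 < R → (∀ i, 0 < r i) →
      (Pairwise fun i k => Disjoint (closedBall (x i) (r i)) (closedBall (x k) (r k))) →
      (∀ i, (closedBall (x i) (r i) ∩
        (ball z R \ closedBall z (R / Real.exp 1))).Nonempty) →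
      (∀ i, Metric.infDist z (closedBall (x i) (r i)) ≤ 2 * r i) →
      Finite I ∧ Nat.card I ≤ C := by
  refine ⟨3600, ?_⟩
  intro I x r z R hR hr hdisj hmeet hdist
  have he3 : Real.exp 1 < 3 := by have := Real.exp_one_lt_d9; linarith
  have he0 : (0:ℝ) < Real.exp 1 := Real.exp_pos 1
  -- choose a point of each disk in the annulus
  choose y hy1 hy2 using hmeet
  -- lower bound on radii
  have hr15 : ∀ i, R / 15 ≤ r i := by
    intro i
    have h1 : dist z (x i) ≤ 4 * r i := by
      have h1 := dist_le_infDist_add_diam (x := z) (s := closedBall (x i) (r i))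
        isBounded_closedBall (mem_closedBall_self (hr i).le)
      have h2 : diam (closedBall (x i) (r i)) ≤ 2 * r i := diam_closedBall (hr i).le
      linarith [hdist i]
    have h2 : R / Real.exp 1 ≤ dist (y i) z := by
      have := (hy2 i).2
      simpa [dist_comm] using le_of_not_gt (fun h => this (mem_closedBall.2 h.le))
    have h3 : dist (y i) z ≤ dist (y i) (x i) + dist (x i) z := dist_triangle _ _ _
    have h4 : dist (y i) (x i) ≤ r i := mem_closedBall.1 (hy1 i)
    have h5 : R / Real.exp 1 ≤ 5 * r i := by rw [dist_comm z (x i)] at h1; linarith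
    have h6 : R / 3 ≤ R / Real.exp 1 :=
      div_le_div_of_nonneg_left hR.le he0 he3.le
    linarith
  set ρ : ℝ := R / 30 with hρ
  have hρ0 : 0 < ρ := by positivity
  -- construct center of inner ball
  set p : I → ℂ := fun i =>
    if dist (x i) (y i) ≤ ρ then x i
    else y i + (ρ / dist (x i) (y i)) • (x i - y i) with hp
  have hpy : ∀ i, dist (p i) (y i) ≤ ρ := by
    intro i
    by_cases h : dist (x i) (y i) ≤ ρ
    · simp [hp, h]
    · push_neg at h
      have hd0 : 0 < dist (x i) (y i) := hρ0.trans h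
      simp only [hp, if_neg (not_le.2 h)]
      rw [dist_eq_norm]
      have : y i + (ρ / dist (x i) (y i)) • (x i - y i) - y i
          = (ρ / dist (x i) (y i)) • (x i - y i) := by ring_nf
      rw [this, norm_smul]
      rw [Real.norm_eq_abs, abs_of_pos (by positivity)]
      have : ‖x i - y i‖ = dist (x i) (y i) := (dist_eq_norm _ _).symm
      rw [this, div_mul_cancel₀ _ hd0.ne']
  have hpx : ∀ i, dist (p i) (x i) + ρ ≤ r i := by
    intro i
    have h4 : dist (x i) (y i) ≤ r i := by
      have := mem_closedBall.1 (hy1 i); rwa [dist_comm]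
    by_cases h : dist (x i) (y i) ≤ ρ
    · simp only [hp, if_pos h, dist_self]
      have := hr15 i
      simp only [hρ]
      linarith
    · push_neg at h
      have hd0 : 0 < dist (x i) (y i) := hρ0.trans h
      simp only [hp, if_neg (not_le.2 h)]
      have key : dist (y i + (ρ / dist (x i) (y i)) • (x i - y i)) (x i)
          = dist (x i) (y i) - ρ := by
        rw [dist_eq_norm]
        have h1 : y i + (ρ / dist (x i) (y i)) • (x i - y i) - x i
            = (1 - ρ / dist (x i) (y i)) • (y i - x i) := by
          simp only [sub_smul, smul_sub, one_smul]
          ring_nf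
        rw [h1, norm_smul, Real.norm_eq_abs]
        have hle : ρ / dist (x i) (y i) ≤ 1 := by
          rw [div_le_one hd0]; exact h.le
        rw [abs_of_nonneg (by linarith)]
        have : ‖y i - x i‖ = dist (x i) (y i) := by
          rw [← dist_eq_norm, dist_comm]
        rw [this, sub_mul, one_mul, div_mul_cancel₀ _ hd0.ne']
      rw [key]; linarith
  have hsub : ∀ i, closedBall (p i) ρ ⊆ closedBall (x i) (r i) := by
    intro i
    exact closedBall_subset_closedBall' (by linarith [hpx i, dist_comm (p i) (x i)])
  have hsub2 : ∀ i, closedBall (p i) ρ ⊆ closedBall z (2 * R) := by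
    intro i
    apply closedBall_subset_closedBall'
    have h1 : dist (p i) z ≤ dist (p i) (y i) + dist (y i) z := dist_triangle _ _ _
    have h2 : dist (y i) z < R := by
      have := (hy2 i).1; rwa [mem_ball] at this
    have := hpy i
    simp only [hρ] at *
    linarith
  -- the small balls are pairwise disjoint
  have hdisj' : Pairwise fun i k => Disjoint (closedBall (p i) ρ) (closedBall (p k) ρ) :=
    fun i k hik => (hdisj hik).mono (hsub i) (hsub k)
  -- counting by area
  have key : ∀ s : Finset I, s.card ≤ 3600 := by
    intro s
    have hvol : (s.card : ℝ≥0∞) * (ENNReal.ofReal ρ ^ 2 * (NNReal.pi : ℝ≥0∞))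
        ≤ ENNReal.ofReal (2 * R) ^ 2 * (NNReal.pi : ℝ≥0∞) := by
      calc (s.card : ℝ≥0∞) * (ENNReal.ofReal ρ ^ 2 * (NNReal.pi : ℝ≥0∞))
          = ∑ i ∈ s, volume (closedBall (p i) ρ) := by
            simp only [Complex.volume_closedBall, Finset.sum_const, nsmul_eq_mul]
        _ = volume (⋃ i ∈ s, closedBall (p i) ρ) := by
            rw [measure_biUnion_finset (fun i _ k _ hik => hdisj' hik)
              (fun i _ => measurableSet_closedBall)]
        _ ≤ volume (closedBall z (2 * R)) := by
            apply measure_mono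
            exact Set.iUnion₂_subset fun i _ => hsub2 i
        _ = ENNReal.ofReal (2 * R) ^ 2 * (NNReal.pi : ℝ≥0∞) := Complex.volume_closedBall z (2 * R)
    have hπ0 : (NNReal.pi : ℝ≥0∞) ≠ 0 :=
      ENNReal.coe_ne_zero.2 NNReal.pi_ne_zero
    have hπt : (NNReal.pi : ℝ≥0∞) ≠ ⊤ := ENNReal.coe_ne_top
    rw [← mul_assoc] at hvol
    have hvol2 : (s.card : ℝ≥0∞) * ENNReal.ofReal ρ ^ 2 ≤ ENNReal.ofReal (2 * R) ^ 2 :=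
      (ENNReal.mul_le_mul_iff_left hπ0 hπt).1 hvol
    have hreal : (s.card : ℝ) * ρ ^ 2 ≤ (2 * R) ^ 2 := by
      have h1 : (s.card : ℝ≥0∞) * ENNReal.ofReal ρ ^ 2
          = ENNReal.ofReal ((s.card : ℝ) * ρ ^ 2) := by
        rw [ENNReal.ofReal_mul (by positivity), ENNReal.ofReal_natCast,
          ENNReal.ofReal_pow hρ0.le]
      have h2 : ENNReal.ofReal (2 * R) ^ 2 = ENNReal.ofReal ((2 * R) ^ 2) := by
        rw [ENNReal.ofReal_pow (by positivity)]
      rw [h1, h2] at hvol2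
      exact (ENNReal.ofReal_le_ofReal_iff (by positivity)).1 hvol2
    have : (s.card : ℝ) ≤ 3600 := by
      have hρsq : ρ ^ 2 = R ^ 2 / 900 := by rw [hρ]; ring
      rw [hρsq] at hreal
      nlinarith [pow_pos hR 2]
    exact_mod_cast this
  have hfin : Finite I := by
    by_contra h
    have : Infinite I := not_finite_iff_infinite.1 h
    obtain ⟨s, hs⟩ := Infinite.exists_subset_card_eq I 3601
    have := key s
    omega
  refine ⟨hfin, ?_⟩
  have : Fintype I := Fintype.ofFinite I
  rw [Nat.card_eq_fintype_card, ← Finset.card_univ]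
  exact key Finset.univ
end

section
/- Let V ⊆ ℂ be a measurable set with 0 < Area(V) < ∞, let ρ : ℂ → [0,∞) be measurable, let (τ_i)_{i∈I} be a countable family of pairwise disjoint closed disks contained in V, let (ρ_i)_{i∈I} be nonnegative reals, and let δ ≥ 0. If δ ≤ ∫_V ρ dA + ∑_{i∈I} diam(τ_i) · ρ_i, then π δ² / (8 · Area(V)) ≤ ∫_V ρ² dA + ∑_{i∈I} ρ_i². -/
/-!
By Cauchy–Schwarz, `(∫_V ρ)² ≤ Area(V) ∫_V ρ²` and `(∑ diam(τᵢ) ρᵢ)² ≤ (∑ diam(τᵢ)²) ∑ ρᵢ²`.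
A disk of diameter `d` has area `π d² / 4`, and the `τᵢ` are disjoint subsets of `V`, so
`π ∑ diam(τᵢ)² ≤ 4 Area(V)`. Hence, using `(a + b)² ≤ 2 (a² + b²)` and `π ≤ 4`,
`π δ² ≤ 2π ((∫_V ρ)² + (∑ diam(τᵢ) ρᵢ)²) ≤ 8 Area(V) (∫_V ρ² + ∑ ρᵢ²)`.
-/

open Set Metric MeasureTheory

namespace ENNReal

theorem add_sq_le_two_mul_add_sq (a b : ℝ≥0∞) : (a + b) ^ 2 ≤ 2 * (a ^ 2 + b ^ 2) := by
  have h := rpow_add_le_mul_rpow_add_rpow a b one_le_two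
  rw [← rpow_natCast, ← rpow_natCast, ← rpow_natCast]
  norm_num at h ⊢
  exact h

theorem ofReal_sq_le (x : ℝ) : ENNReal.ofReal x ^ 2 ≤ ENNReal.ofReal (x ^ 2) := by
  rcases le_total 0 x with hx | hx
  · rw [ofReal_pow hx]
  · simp [ofReal_of_nonpos hx]

section lintegral

variable {α : Type*} [MeasurableSpace α] (μ : Measure α)

theorem sq_lintegral_mul_le {f g : α → ℝ≥0∞} (hf : AEMeasurable f μ) (hg : AEMeasurable g μ) :
    (∫⁻ a, f a * g a ∂μ) ^ 2 ≤ (∫⁻ a, f a ^ 2 ∂μ) * ∫⁻ a, g a ^ 2 ∂μ := by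
  have h := lintegral_mul_le_Lp_mul_Lq μ Real.HolderConjugate.two_two hf hg
  simp only [Pi.mul_apply, rpow_two] at h
  calc (∫⁻ a, f a * g a ∂μ) ^ 2
      ≤ ((∫⁻ a, f a ^ 2 ∂μ) ^ (1 / 2 : ℝ) * (∫⁻ a, g a ^ 2 ∂μ) ^ (1 / 2 : ℝ)) ^ 2 := by gcongr
    _ = (∫⁻ a, f a ^ 2 ∂μ) * ∫⁻ a, g a ^ 2 ∂μ := by
      rw [mul_pow, ← rpow_natCast, ← rpow_natCast, ← rpow_mul, ← rpow_mul]
      norm_num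

theorem sq_lintegral_le_lintegral_sq_mul {f : α → ℝ≥0∞} (hf : AEMeasurable f μ) :
    (∫⁻ a, f a ∂μ) ^ 2 ≤ (∫⁻ a, f a ^ 2 ∂μ) * μ univ := by
  simpa using sq_lintegral_mul_le μ hf aemeasurable_const (g := 1)

end lintegral

theorem sq_tsum_mul_le {ι : Type*} (f g : ι → ℝ≥0∞) :
    (∑' i, f i * g i) ^ 2 ≤ (∑' i, f i ^ 2) * ∑' i, g i ^ 2 := by
  let _ : MeasurableSpace ι := ⊤
  simpa only [lintegral_count] using
    sq_lintegral_mul_le (Measure.count : Measure ι) measurable_from_top.aemeasurable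
      measurable_from_top.aemeasurable

end ENNReal

theorem Complex.four_mul_volume_closedBall (x : ℂ) {t : ℝ} (ht : 0 ≤ t) :
    4 * volume (closedBall x t) = ENNReal.ofReal (Real.pi * diam (closedBall x t) ^ 2) := by
  rw [diam_closedBall_eq x ht, Complex.volume_closedBall, ← ENNReal.ofReal_pow ht,
    ← NNReal.coe_real_pi, ENNReal.ofReal_coe_nnreal.symm, ← ENNReal.ofReal_ofNat,
    ← ENNReal.ofReal_mul (by positivity), ← ENNReal.ofReal_mul (by positivity)]
  ring_nf

theorem Complex.pi_mul_tsum_sq_diam_le_four_mul_volume {I : Type*} [Countable I] {V : Set ℂ}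
    {τ : I → Set ℂ} (hτ : ∀ i, ∃ x t, 0 ≤ t ∧ τ i = closedBall x t)
    (hdisj : Pairwise fun i k => Disjoint (τ i) (τ k)) (hsub : ∀ i, τ i ⊆ V) :
    ENNReal.ofReal Real.pi * ∑' i, ENNReal.ofReal (diam (τ i) ^ 2) ≤ 4 * volume V := by
  have hdisk :
      ∀ i, ENNReal.ofReal Real.pi * ENNReal.ofReal (diam (τ i) ^ 2) = 4 * volume (τ i) := by
    intro i
    obtain ⟨x, t, ht, hx⟩ := hτ i
    rw [hx, four_mul_volume_closedBall x ht, ENNReal.ofReal_mul Real.pi_pos.le]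
  have hmeas : ∀ i, MeasurableSet (τ i) := fun i => by
    obtain ⟨x, t, -, hx⟩ := hτ i
    exact hx ▸ measurableSet_closedBall
  calc ENNReal.ofReal Real.pi * ∑' i, ENNReal.ofReal (diam (τ i) ^ 2)
      = 4 * volume (⋃ i, τ i) := by
        rw [← ENNReal.tsum_mul_left, measure_iUnion hdisj hmeas, ← ENNReal.tsum_mul_left]
        exact tsum_congr hdisk
    _ ≤ 4 * volume V := by gcongr; exact iUnion_subset hsub

theorem transboundary_energy_lower_bound_general
    (V : Set ℂ)
    (ρ : ℂ → ℝ) (hρmeas : Measurable ρ)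
    (I : Type) [Countable I] (τ : I → Set ℂ)
    (hτ : ∀ i, ∃ x t, 0 ≤ t ∧ τ i = closedBall x t)
    (hdisj : Pairwise fun i k => Disjoint (τ i) (τ k))
    (hsub : ∀ i, τ i ⊆ V)
    (ρi : I → ℝ)
    (δ : ℝ) (hδ : 0 ≤ δ)
    (hadm : ENNReal.ofReal δ ≤ (∫⁻ w in V, ENNReal.ofReal (ρ w) ∂volume)
        + ∑' i, ENNReal.ofReal (Metric.diam (τ i) * ρi i)) :
    ENNReal.ofReal (Real.pi * δ ^ 2) / (8 * volume V)
      ≤ (∫⁻ w in V, ENNReal.ofReal (ρ w ^ 2) ∂volume)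
        + ∑' i, ENNReal.ofReal (ρi i ^ 2) := by
  set X := ∫⁻ w in V, ENNReal.ofReal (ρ w) ∂volume
  set Y := ∑' i, ENNReal.ofReal (diam (τ i) * ρi i)
  set E₁ := ∫⁻ w in V, ENNReal.ofReal (ρ w ^ 2) ∂volume
  set E₂ := ∑' i, ENNReal.ofReal (ρi i ^ 2)
  set D := ∑' i, ENNReal.ofReal (diam (τ i) ^ 2)
  have hX : X ^ 2 ≤ E₁ * volume V := by
    refine (ENNReal.sq_lintegral_le_lintegral_sq_mul _ hρmeas.ennreal_ofReal.aemeasurable).trans ?_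
    rw [Measure.restrict_apply_univ]
    gcongr
    exact lintegral_mono fun w => ENNReal.ofReal_sq_le (ρ w)
  have hY : Y ^ 2 ≤ D * E₂ := by
    simp only [Y, ENNReal.ofReal_mul diam_nonneg]
    refine (ENNReal.sq_tsum_mul_le _ _).trans ?_
    gcongr
    · exact (tsum_congr fun i => (ENNReal.ofReal_pow (diam_nonneg (s := τ i)) 2).symm).le
    · exact ENNReal.tsum_le_tsum fun i => ENNReal.ofReal_sq_le (ρi i)
  have hπD : ENNReal.ofReal Real.pi * D ≤ 4 * volume V :=
    Complex.pi_mul_tsum_sq_diam_le_four_mul_volume hτ hdisj hsub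
  have hπ : ENNReal.ofReal Real.pi ≤ 4 := by
    simpa using ENNReal.ofReal_le_ofReal Real.pi_le_four
  refine ENNReal.div_le_of_le_mul ?_
  calc ENNReal.ofReal (Real.pi * δ ^ 2)
      = ENNReal.ofReal Real.pi * ENNReal.ofReal δ ^ 2 := by
        rw [ENNReal.ofReal_mul Real.pi_pos.le, ENNReal.ofReal_pow hδ]
    _ ≤ ENNReal.ofReal Real.pi * (2 * (X ^ 2 + Y ^ 2)) := by
        gcongr
        exact (pow_le_pow_left' hadm 2).trans (ENNReal.add_sq_le_two_mul_add_sq X Y)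
    _ ≤ ENNReal.ofReal Real.pi * (2 * (E₁ * volume V + D * E₂)) := by gcongr
    _ = 2 * (ENNReal.ofReal Real.pi * E₁ * volume V + ENNReal.ofReal Real.pi * D * E₂) := by ring
    _ ≤ 2 * (4 * E₁ * volume V + 4 * volume V * E₂) := by gcongr
    _ = (E₁ + E₂) * (8 * volume V) := by ring

/-- The quantitative transboundary-modulus lower bound: if
`δ ≤ ∫_V ρ dA + ∑ diam(τ_i) ρ_i` for pairwise disjoint closed disks `τ_i ⊆ V`, then
`π δ² / (8 Area V) ≤ ∫_V ρ² dA + ∑ ρ_i²`. -/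
theorem transboundary_energy_lower_bound
    (V : Set ℂ) (hV : MeasurableSet V) (hpos : 0 < volume V) (hfin : volume V < ⊤)
    (ρ : ℂ → ℝ) (hρmeas : Measurable ρ) (hρ0 : ∀ w, 0 ≤ ρ w)
    (I : Type) [Countable I] (τ : I → Set ℂ)
    (hτ : ∀ i, ∃ x t, 0 ≤ t ∧ τ i = closedBall x t)
    (hdisj : Pairwise fun i k => Disjoint (τ i) (τ k))
    (hsub : ∀ i, τ i ⊆ V)
    (ρi : I → ℝ) (hρi : ∀ i, 0 ≤ ρi i)
    (δ : ℝ) (hδ : 0 ≤ δ)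
    (hadm : ENNReal.ofReal δ ≤ (∫⁻ w in V, ENNReal.ofReal (ρ w) ∂volume)
        + ∑' i, ENNReal.ofReal (Metric.diam (τ i) * ρi i)) :
    ENNReal.ofReal (Real.pi * δ ^ 2) / (8 * volume V)
      ≤ (∫⁻ w in V, ENNReal.ofReal (ρ w ^ 2) ∂volume)
        + ∑' i, ENNReal.ofReal (ρi i ^ 2) :=
  transboundary_energy_lower_bound_general V ρ hρmeas I τ hτ hdisj hsub ρi δ hδ hadm
end
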